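/- Suppose n ≥ 2 and π is a Fishburn permutation of length n avoiding both 321 and 1423 which has a descent. Then either the left entry of the rightmost descent of π equals n, or π_n = n. -/

import Mathlib

/-- Two lists of naturals have the same length and the same relative order
(including ties). -/
def SameRelOrder (u v : List ℕ) : Prop :=
  u.length = v.length ∧
    ∀ i j, i < u.length → j < u.length →
      (u.getD i 0 < u.getD j 0 ↔ v.getD i 0 < v.getD j 0)

/-- `α` contains `β` as a pattern: some subsequence of `α` has the same length
and relative order as `β`. -/
def SeqContains (α β : List ℕ) : Prop :=
  ∃ γ : List ℕ, γ.Sublist α ∧ SameRelOrder γ β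

/-- A copy of the Fishburn pattern `f` in `l`: indices `j`, `k` with `j + 1 < k`,
`l j = l k + 1` and `l (j+1) > l j`. -/
def HasFishburnCopy (l : List ℕ) : Prop :=
  ∃ j k, j + 1 < k ∧ k < l.length ∧
    l.getD j 0 = l.getD k 0 + 1 ∧ l.getD j 0 < l.getD (j + 1) 0

/-- A Fishburn permutation contains no copy of the Fishburn pattern `f`. -/
def FishburnFree (l : List ℕ) : Prop := ¬ HasFishburnCopy l

/-- `l` is a permutation of `1, …, n`, written in one-line notation. -/
def IsPermList (n : ℕ) (l : List ℕ) : Prop := l.Perm (List.range' 1 n)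

/-- The set of Fishburn permutations of length `n` avoiding each pattern in `pats`. -/
def FishburnSet (n : ℕ) (pats : List (List ℕ)) : Set (List ℕ) :=
  {l | IsPermList n l ∧ FishburnFree l ∧ ∀ p ∈ pats, ¬ SeqContains l p}

/-- The set of all permutations of length `n` avoiding each pattern in `pats`. -/
def PermSet (n : ℕ) (pats : List (List ℕ)) : Set (List ℕ) :=
  {l | IsPermList n l ∧ ∀ p ∈ pats, ¬ SeqContains l p}

/-- The number of ascents of a sequence. -/
def ascCount (l : List ℕ) : ℕ :=
  ((Finset.range l.length).filter
    (fun i => i + 1 < l.length ∧ l.getD i 0 < l.getD (i + 1) 0)).card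

/-- `l` is an ascent sequence. -/
def IsAscentSeq (l : List ℕ) : Prop :=
  (0 < l.length → l.getD 0 0 = 0) ∧
    ∀ j, 0 < j → j < l.length → l.getD j 0 ≤ 1 + ascCount (l.take j)

/-- The set of ascent sequences of length `n` avoiding each pattern in `pats`. -/
def AscentSeqSet (n : ℕ) (pats : List (List ℕ)) : Set (List ℕ) :=
  {l | l.length = n ∧ IsAscentSeq l ∧ ∀ p ∈ pats, ¬ SeqContains l p}

/-- `j` is a descent of `l` (0-indexed): `l j > l (j+1)`. -/
def IsDescent (l : List ℕ) (j : ℕ) : Prop :=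
  j + 1 < l.length ∧ l.getD (j + 1) 0 < l.getD j 0


/-! If `n` is not the last entry, it sits at some position `p` with `p + 1 < n`, so `p` is a
descent; any descent `i > p` would give a copy `n, π_i, π_{i+1}` of `321`. Hence `p` is the
rightmost descent and its left entry is `n`. -/

namespace IsPermList

variable {n : ℕ} {l : List ℕ}

theorem length_eq (h : IsPermList n l) : l.length = n := by
  simpa using List.Perm.length_eq h

theorem nodup (h : IsPermList n l) : l.Nodup :=
  h.nodup_iff.mpr List.nodup_range'

theorem mem_iff (h : IsPermList n l) {a : ℕ} : a ∈ l ↔ 1 ≤ a ∧ a ≤ n := by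
  rw [List.Perm.mem_iff h, List.mem_range'_1]
  omega

theorem getElem_lt_of_ne (h : IsPermList n l) {i p : ℕ} (hi : i < l.length) (hp : p < l.length)
    (hpn : l[p] = n) (hip : i ≠ p) : l[i] < n := by
  have hle := (h.mem_iff.mp (List.getElem_mem hi)).2
  have hne : l[i] ≠ l[p] := fun he => hip ((h.nodup.getElem_inj_iff).mp he)
  omega

theorem isDescent_of_getElem_eq (h : IsPermList n l) {p : ℕ} (hp : p < l.length)
    (hpn : l[p] = n) (hp1 : p + 1 < l.length) : IsDescent l p := by
  refine ⟨hp1, ?_⟩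
  rw [List.getD_eq_getElem _ _ hp1, List.getD_eq_getElem _ _ hp, hpn]
  exact h.getElem_lt_of_ne hp1 hp hpn (by omega)

end IsPermList

theorem List.sublist_of_lt_of_succ_lt {α : Type*} {l : List α} {p i : ℕ} (hpi : p < i)
    (hi : i + 1 < l.length) : [l[p], l[i], l[i + 1]].Sublist l := by
  have h1 : [l[i], l[i + 1]].Sublist (l.drop i) := by
    rw [← List.getElem_cons_drop (by omega : i < l.length), ← List.getElem_cons_drop hi]
    exact ((List.nil_sublist _).cons_cons _).cons_cons _
  have h2 : (l.drop i).Sublist (l.drop (p + 1)) := by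
    rw [show i = (p + 1) + (i - (p + 1)) by omega, ← List.drop_drop]
    exact List.drop_sublist _ _
  have h3 : (l[p] :: l.drop (p + 1)).Sublist l := by
    rw [List.getElem_cons_drop]
    exact List.drop_sublist _ _
  exact ((h1.trans h2).cons_cons _).trans h3

theorem seqContains_321_of_isDescent {l : List ℕ} {p i : ℕ} (hpi : p < i) (hi : IsDescent l i)
    (hlt : l.getD i 0 < l.getD p 0) : SeqContains l [3, 2, 1] := by
  obtain ⟨hi1, hdes⟩ := hi
  rw [List.getD_eq_getElem _ _ hi1] at hdes
  rw [List.getD_eq_getElem _ _ (by omega : i < l.length)] at hlt hdes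
  rw [List.getD_eq_getElem _ _ (by omega : p < l.length)] at hlt
  refine ⟨_, List.sublist_of_lt_of_succ_lt hpi hi1, by simp, fun a b ha hb => ?_⟩
  simp only [List.length_cons, List.length_nil] at ha hb
  interval_cases a <;> interval_cases b <;> simp <;> omega

theorem IsPermList.isDescent_le_of_getElem_eq {n : ℕ} {l : List ℕ} (h : IsPermList n l)
    (h321 : ¬ SeqContains l [3, 2, 1]) {p : ℕ} (hp : p < l.length) (hpn : l[p] = n) {i : ℕ}
    (hi : IsDescent l i) : i ≤ p := by
  have hi1 := hi.1
  by_contra! hpi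
  refine h321 (seqContains_321_of_isDescent hpi hi ?_)
  rw [List.getD_eq_getElem _ _ hp, List.getD_eq_getElem _ _ (by omega : i < l.length), hpn]
  exact h.getElem_lt_of_ne _ hp hpn (by omega)

theorem stmt14_general (n : ℕ) (π : List ℕ)
    (hπ : π ∈ FishburnSet n [[3, 2, 1], [1, 4, 2, 3]]) :
    (∃ j, IsDescent π j ∧ (∀ i, IsDescent π i → i ≤ j) ∧ π.getD j 0 = n) ∨
      π.getD (n - 1) 0 = n := by
  obtain ⟨hperm, -, havoid⟩ := hπ
  by_cases hlast : π.getD (n - 1) 0 = n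
  · exact Or.inr hlast
  have hlen := hperm.length_eq
  have hn : 1 ≤ n := by
    by_contra! hn0
    simp_all [List.eq_nil_of_length_eq_zero (hlen.trans (by omega))]
  obtain ⟨p, hp, hpn⟩ := List.getElem_of_mem (hperm.mem_iff.mpr ⟨hn, le_rfl⟩)
  have hp1 : p + 1 < π.length := by
    by_contra!
    obtain rfl : p = n - 1 := by omega
    exact hlast (by rw [List.getD_eq_getElem _ _ hp, hpn])
  refine Or.inl ⟨p, hperm.isDescent_of_getElem_eq hp hpn hp1,
    fun i => hperm.isDescent_le_of_getElem_eq (havoid _ (by simp)) hp hpn, ?_⟩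
  rw [List.getD_eq_getElem _ _ hp, hpn]

/-- Suppose `n ≥ 2` and `π ∈ F_n(321, 1423)` has a descent.  Then either `n` is the
left entry of the rightmost descent of `π`, or the last entry of `π` is `n`. -/
theorem stmt14 (n : ℕ) (hn : 2 ≤ n) (π : List ℕ)
    (hπ : π ∈ FishburnSet n [[3, 2, 1], [1, 4, 2, 3]])
    (hdes : ∃ j, IsDescent π j) :
    (∃ j, IsDescent π j ∧ (∀ i, IsDescent π i → i ≤ j) ∧ π.getD j 0 = n) ∨
      π.getD (n - 1) 0 = n :=
  stmt14_general n π hπ
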